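/- The elliptic quadric is a complex hypersurface in suitable coordinates: the ℝ-linear bijection Φ : ℂ⁴ → ℂ⁴ given by Φ(z₁, z₂, w₁, w₂) = (z₁, conj(z₂), w₁ + i·w₂, conj(w₁) + i·conj(w₂)) maps the elliptic quadric Q = {(z₁,z₂,w₁,w₂) ∈ ℂ⁴ : Im w₁ = Re(z₁·conj(z₂)) and Im w₂ = Im(z₁·conj(z₂))} bijectively onto the complex affine hypersurface {(ζ₁, ζ₂, η₁, η₂) ∈ ℂ⁴ : η₁ − η₂ = 2i·ζ₁·ζ₂}. -/

import Mathlib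

open Complex

/-- The ℝ-linear change of coordinates
`Φ(z₁, z₂, w₁, w₂) = (z₁, conj z₂, w₁ + i w₂, conj w₁ + i conj w₂)`. -/
def ellipticCoords : ℂ × ℂ × ℂ × ℂ → ℂ × ℂ × ℂ × ℂ :=
  fun p => (p.1, starRingEnd ℂ p.2.1, p.2.2.1 + Complex.I * p.2.2.2,
    starRingEnd ℂ p.2.2.1 + Complex.I * starRingEnd ℂ p.2.2.2)

/-- The elliptic quadric `{Im w₁ = Re(z₁ z̄₂), Im w₂ = Im(z₁ z̄₂)} ⊆ ℂ⁴`. -/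
def ellipticQuadric : Set (ℂ × ℂ × ℂ × ℂ) :=
  {p | (p.2.2.1).im = (p.1 * starRingEnd ℂ p.2.1).re ∧
       (p.2.2.2).im = (p.1 * starRingEnd ℂ p.2.1).im}

/-- The complex affine hypersurface `{η₁ − η₂ = 2i ζ₁ ζ₂} ⊆ ℂ⁴`. -/
def complexHypersurface : Set (ℂ × ℂ × ℂ × ℂ) :=
  {q | q.2.2.1 - q.2.2.2 = 2 * Complex.I * q.1 * q.2.1}

open ComplexConjugate

/-!
Writing `η₁ = w₁ + i w₂` and `η₂ = conj w₁ + i conj w₂`, one has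
`η₁ − η₂ = (w₁ − conj w₁) + i (w₂ − conj w₂) = 2i (Im w₁ + i Im w₂)`, while `2i ζ₁ ζ₂ = 2i z₁ conj z₂`.
So after cancelling `2i` the equation of the hypersurface is exactly `Im w₁ + i Im w₂ = z₁ conj z₂`,
the complex form of the two real equations of the quadric. The map `Φ` is invertible since
`w₁ = (η₁ + conj η₂) / 2` and `w₂ = (η₁ − conj η₂) / 2i`.
-/

noncomputable def ellipticCoordsEquiv : (ℂ × ℂ × ℂ × ℂ) ≃ (ℂ × ℂ × ℂ × ℂ) where
  toFun := ellipticCoords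
  invFun q := (q.1, conj q.2.1, (q.2.2.1 + conj q.2.2.2) / 2, (q.2.2.1 - conj q.2.2.2) / (2 * I))
  left_inv p := by
    ext <;> simp only [ellipticCoords, conj_conj, map_add, map_mul, conj_I] <;> field_simp <;> ring
  right_inv q := by
    ext <;> simp only [ellipticCoords, conj_conj, map_add, map_sub, map_mul, map_div₀, conj_I,
      conj_ofNat] <;> field_simp <;> ring

lemma add_I_mul_sub_conj_add_I_mul_conj (w₁ w₂ : ℂ) :
    w₁ + I * w₂ - (conj w₁ + I * conj w₂) = 2 * I * (w₁.im + w₂.im * I) := by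
  have h₁ := sub_conj w₁
  have h₂ := sub_conj w₂
  push_cast at h₁ h₂
  linear_combination h₁ + I * h₂

lemma mem_ellipticQuadric_iff (p : ℂ × ℂ × ℂ × ℂ) :
    p ∈ ellipticQuadric ↔ (p.2.2.1.im + p.2.2.2.im * I : ℂ) = p.1 * conj p.2.1 := by
  simp [ellipticQuadric, Complex.ext_iff]

lemma ellipticCoords_mem_complexHypersurface_iff (p : ℂ × ℂ × ℂ × ℂ) :
    ellipticCoords p ∈ complexHypersurface ↔ p ∈ ellipticQuadric := by
  have h2I : (2 * I : ℂ) ≠ 0 := mul_ne_zero two_ne_zero I_ne_zero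
  rw [mem_ellipticQuadric_iff, ← mul_right_inj' h2I, ← add_I_mul_sub_conj_add_I_mul_conj,
    ← mul_assoc]
  rfl

/-- In suitable coordinates the elliptic quadric becomes a complex hypersurface:
`Φ` is a bijection of `ℂ⁴` mapping the elliptic quadric onto `{η₁ − η₂ = 2i ζ₁ ζ₂}`. -/
theorem elliptic_quadric_is_complex_hypersurface :
    Function.Bijective ellipticCoords ∧
    Set.BijOn ellipticCoords ellipticQuadric complexHypersurface := by
  have hΦ : Function.Bijective ellipticCoords := ellipticCoordsEquiv.bijective
  have hQ : ellipticQuadric = ellipticCoords ⁻¹' complexHypersurface :=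
    Set.ext fun p => (ellipticCoords_mem_complexHypersurface_iff p).symm
  exact ⟨hΦ, hQ ▸ hΦ.bijOn_preimage⟩
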